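/- Let N ≥ 1, a ∈ (0,1), w ≥ 0. On a probability space let (W_n)_{n≥1}, (T_n)_{n≥1}, (S_n)_{n≥1}, (A_n)_{n≥2} be nonnegative random variables and (Y_n)_{n≥1} random variables in Fin N with, almost surely, W_1 = w, T_1 = 0, W_{n+1} = max(a W_n + S_n − A_{n+1}, 0) and T_{n+1} = T_n + A_{n+1} for all n ≥ 1. Let μ_i be probability measures on [0,∞) with β_i(z) := ∫ e^{-z x} dμ_i(x), and let χ_{i j} : ℂ → ℂ and ψ_i : ℂ → ℂ be functions with Re ψ_i(z) ≥ 0 whenever Re z ≥ 0. Assume: for every n ≥ 1, all i, j, all bounded measurable φ : ℝ × ℝ → ℂ and ξ : ℝ → ℂ, and every z ∈ ℂ with Re z ≥ 0, E[φ(W_n, T_n) ξ(S_n) e^{-z A_{n+1}} 1_{Y_n=i} 1_{Y_{n+1}=j}] = E[φ(W_n, T_n) 1_{Y_n=i}] · χ_{i j}(z) · ∫ ξ(t) e^{-ψ_i(z) t} dμ_i(t). Set p_j := P(Y_1 = j). Then for all r, s, η ∈ ℂ with |r| < 1, Re s = 0, Re η ≥ 0, the series Z_j(r,s,η) := Σ_{n≥1}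 r^n E[e^{-s W_n − η T_n} 1_{Y_n=j}] and V_j(r,s,η) := Σ_{n≥1} r^{n+1} E[(1 − e^{-s·min(a W_n + S_n − A_{n+1}, 0)}) e^{-η T_{n+1}} 1_{Y_{n+1}=j}] converge absolutely and, for every j: Z_j(r,s,η) − r p_j e^{-s w} = r Σ_i Z_i(r, a s, η) β_i(s + ψ_i(η − s)) χ_{i j}(η − s) + V_j(r,s,η). -/

import Mathlib

/-!
Write `X_n = a W_n + S_n - A_{n+1}`, so that `W_{n+1} = max(X_n, 0)`. The identity
`e^{-s max(X,0)} = e^{-s X} + (1 - e^{-s min(X,0)})` splits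
`E[e^{-s W_{n+1} - η T_{n+1}} 1_{Y_{n+1}=j}]` into
`E[e^{-a s W_n - η T_n} e^{-s S_n} e^{-(η-s) A_{n+1}} 1_{Y_{n+1}=j}]` plus the `n`-th summand of
`V_j`. Decomposing the first expectation over the events `Y_n = i` and applying the factorization
hypothesis with `z = η - s`, `ξ(t) = e^{-s t}` evaluates it as
`Σ_i E[e^{-a s W_n - η T_n} 1_{Y_n=i}] β_i(s + ψ_i(η - s)) χ_{ij}(η - s)`.
Multiplying by `r^{n+1}` and summing over `n` gives the equation. Since `Re s = 0`, `Re η ≥ 0` and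
`T, A ≥ 0`, all integrands are bounded by `2`, so every series is dominated by a geometric one.
-/

open MeasureTheory Set

/-- Terms of the series `Z_j(r,s,η) = Σ_{n≥1} r^n E[e^{-s W_n − η T_n} 1_{Y_n=j}]`
(indexed so that term `n` corresponds to time `n+1`). -/
noncomputable def ZserTerm {Ω : Type*} [MeasureSpace Ω] {N : ℕ}
    (W T : ℕ → Ω → ℝ) (Y : ℕ → Ω → Fin N) (j : Fin N) (r s η : ℂ) (n : ℕ) : ℂ :=
  r ^ (n + 1) * ∫ ω, Complex.exp (-s * W (n + 1) ω - η * T (n + 1) ω) *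
    (if Y (n + 1) ω = j then (1 : ℂ) else 0)

/-- Terms of the series
`V_j(r,s,η) = Σ_{n≥1} r^{n+1} E[(1 − e^{-s·min(a W_n + S_n − A_{n+1}, 0)}) e^{-η T_{n+1}} 1_{Y_{n+1}=j}]`
(indexed so that term `n` corresponds to time `n+1`). -/
noncomputable def VserTerm {Ω : Type*} [MeasureSpace Ω] {N : ℕ}
    (W S A T : ℕ → Ω → ℝ) (Y : ℕ → Ω → Fin N) (a : ℝ) (j : Fin N)
    (r s η : ℂ) (n : ℕ) : ℂ :=
  r ^ (n + 2) * ∫ ω,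
    (1 - Complex.exp (-s * (min (a * W (n + 1) ω + S (n + 1) ω - A (n + 2) ω) 0 : ℝ))) *
      Complex.exp (-η * T (n + 2) ω) * (if Y (n + 2) ω = j then (1 : ℂ) else 0)

lemma norm_ite_one_zero_le (p : Prop) [Decidable p] : ‖(if p then (1 : ℂ) else 0)‖ ≤ 1 := by
  split_ifs <;> simp

lemma norm_cexp_neg_mul_ofReal_le_one {z : ℂ} (hz : 0 ≤ z.re) {t : ℝ} (ht : 0 ≤ t) :
    ‖Complex.exp (-z * t)‖ ≤ 1 := by
  rw [Complex.norm_exp, Real.exp_le_one_iff]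
  simpa using mul_nonneg hz ht

lemma norm_cexp_neg_mul_ofReal_of_re_eq_zero {s : ℂ} (hs : s.re = 0) (x : ℝ) :
    ‖Complex.exp (-s * x)‖ = 1 := by
  simp [Complex.norm_exp, hs]

lemma norm_cexp_neg_mul_sub_le_one {s η : ℂ} (hs : s.re = 0) (hη : 0 ≤ η.re) (x : ℝ) {t : ℝ}
    (ht : 0 ≤ t) : ‖Complex.exp (-s * x - η * t)‖ ≤ 1 := by
  rw [sub_eq_add_neg, Complex.exp_add, norm_mul, norm_cexp_neg_mul_ofReal_of_re_eq_zero hs,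
    one_mul, ← neg_mul]
  exact norm_cexp_neg_mul_ofReal_le_one hη ht

lemma norm_one_sub_cexp_neg_mul_le_two {s : ℂ} (hs : s.re = 0) (x : ℝ) :
    ‖1 - Complex.exp (-s * x)‖ ≤ 2 :=
  (norm_sub_le _ _).trans (by rw [norm_one, norm_cexp_neg_mul_ofReal_of_re_eq_zero hs]; norm_num)

lemma norm_VserTerm_integrand_le {s η : ℂ} (hs : s.re = 0) (hη : 0 ≤ η.re) (x : ℝ) {t : ℝ}
    (ht : 0 ≤ t) (p : Prop) [Decidable p] :
    ‖(1 - Complex.exp (-s * x)) * Complex.exp (-η * t) * (if p then (1 : ℂ) else 0)‖ ≤ 2 := by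
  simp only [norm_mul]
  refine le_of_le_of_eq (b := 2 * 1 * 1) ?_ (by norm_num)
  gcongr
  · exact norm_one_sub_cexp_neg_mul_le_two hs x
  · exact norm_cexp_neg_mul_ofReal_le_one hη ht
  · exact norm_ite_one_zero_le p

lemma cexp_neg_mul_max_zero (s : ℂ) (x : ℝ) :
    Complex.exp (-s * (max x 0 : ℝ)) =
      Complex.exp (-s * x) + (1 - Complex.exp (-s * (min x 0 : ℝ))) := by
  rcases le_total 0 x with h | h
  · simp [max_eq_left h, min_eq_right h]
  · simp [max_eq_right h, min_eq_left h]

lemma cexp_step_eq (s η : ℂ) (a x t u v : ℝ) :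
    Complex.exp (-s * (max (a * x + u - v) 0 : ℝ) - η * (t + v : ℝ)) =
      Complex.exp (-(a * s) * x - η * t) * Complex.exp (-s * u) * Complex.exp (-(η - s) * v) +
        (1 - Complex.exp (-s * (min (a * x + u - v) 0 : ℝ))) * Complex.exp (-η * (t + v : ℝ)) := by
  have hsplit : Complex.exp (-s * (a * x + u - v : ℝ)) * Complex.exp (-η * (t + v : ℝ)) =
      Complex.exp (-(a * s) * x - η * t) * Complex.exp (-s * u) * Complex.exp (-(η - s) * v) := by
    simp only [← Complex.exp_add]
    push_cast
    ring_nf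
  rw [sub_eq_add_neg, Complex.exp_add, cexp_neg_mul_max_zero, ← hsplit, neg_mul_eq_neg_mul]
  ring

lemma tsum_sub_zero_eq_of_succ {R ι : Type*} [Ring R] [TopologicalSpace R] [IsTopologicalRing R]
    [T2Space R] [Fintype ι] {z v : ℕ → R} {z' : ι → ℕ → R} {r : R} {c : ι → R}
    (hz : Summable z) (hz' : ∀ i, Summable (z' i)) (hv : Summable v)
    (hstep : ∀ n, z (n + 1) = r * ∑ i, z' i n * c i + v n) :
    ∑' n, z n - z 0 = r * ∑ i, (∑' n, z' i n) * c i + ∑' n, v n := by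
  have hz'c (i : ι) : Summable fun n => z' i n * c i := (hz' i).mul_right (c i)
  have hsum : Summable fun n => ∑ i, z' i n * c i := summable_sum fun i _ => hz'c i
  rw [hz.tsum_eq_zero_add, add_sub_cancel_left, tsum_congr hstep, (hsum.mul_left r).tsum_add hv,
    hsum.tsum_mul_left, Summable.tsum_finsetSum fun i _ => hz'c i]
  simp_rw [(hz' _).tsum_mul_right]

lemma integral_eq_sum_integral_mul_ite {α ι : Type*} [MeasurableSpace α] {μ : Measure α}
    [Fintype ι] [DecidableEq ι] [MeasurableSpace ι] [MeasurableSingletonClass ι] {f : α → ℂ}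
    (hf : Integrable f μ) {Y : α → ι} (hY : Measurable Y) :
    ∫ x, f x ∂μ = ∑ i, ∫ x, f x * (if Y x = i then (1 : ℂ) else 0) ∂μ := by
  have hint (i : ι) : Integrable (fun x => f x * (if Y x = i then (1 : ℂ) else 0)) μ := by
    have : (fun x => f x * (if Y x = i then (1 : ℂ) else 0)) = {x | Y x = i}.indicator f := by
      ext x; by_cases hx : Y x = i <;> simp [hx]
    exact this ▸ hf.indicator (hY (measurableSet_singleton i))
  rw [← integral_finsetSum _ fun i _ => hint i]
  congr 1; ext x
  rw [Finset.sum_eq_single (Y x) (fun i _ hi => by simp [Ne.symm hi]) (by simp)]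
  simp

@[fun_prop]
lemma measurable_ite_eq_one_zero {α ι : Type*} [MeasurableSpace α] [MeasurableSpace ι]
    [MeasurableSingletonClass ι] [DecidableEq ι] {Y : α → ι} (hY : Measurable Y) (j : ι) :
    Measurable fun x => if Y x = j then (1 : ℂ) else 0 :=
  Measurable.ite (hY (measurableSet_singleton j)) measurable_const measurable_const

section Recursion

variable {Ω : Type*} [MeasureSpace Ω] {N : ℕ} {W T S A : ℕ → Ω → ℝ} {Y : ℕ → Ω → Fin N}
  {a : ℝ} {j : Fin N} {r s η : ℂ} {n : ℕ}

lemma ZserTerm_zero {w : ℝ} (hY : Measurable (Y 1)) (h₁ : ∀ᵐ ω, W 1 ω = w ∧ T 1 ω = 0) :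
    ZserTerm W T Y j r s η 0 = r * (volume {ω | Y 1 ω = j}).toReal * Complex.exp (-s * w) := by
  have h : (fun ω => Complex.exp (-s * W 1 ω - η * T 1 ω) * (if Y 1 ω = j then (1 : ℂ) else 0))
      =ᵐ[volume] {ω | Y 1 ω = j}.indicator fun _ => Complex.exp (-s * w) := by
    filter_upwards [h₁] with ω ⟨hW, hT⟩
    by_cases hω : Y 1 ω = j <;> simp [hω, hW, hT]
  have hj : MeasurableSet {ω | Y 1 ω = j} := hY (measurableSet_singleton j)
  rw [ZserTerm, integral_congr_ae h, integral_indicator_const _ hj,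
    Complex.real_smul, measureReal_def]
  ring

def LaplaceFactorizationAt (W T S A : ℕ → Ω → ℝ) (Y : ℕ → Ω → Fin N) (μ : Fin N → Measure ℝ)
    (χ : Fin N → Fin N → ℂ → ℂ) (ψ : Fin N → ℂ → ℂ) (n : ℕ) : Prop :=
  ∀ (i j : Fin N) (φ : ℝ × ℝ → ℂ) (ξ : ℝ → ℂ),
    Measurable φ → (∃ C, ∀ x, ‖φ x‖ ≤ C) → Measurable ξ → (∃ C, ∀ t, ‖ξ t‖ ≤ C) →
    ∀ z : ℂ, 0 ≤ z.re →
    (∫ ω, φ (W n ω, T n ω) * ξ (S n ω) * Complex.exp (-z * A (n + 1) ω) *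
        (if Y n ω = i then (1 : ℂ) else 0) * (if Y (n + 1) ω = j then (1 : ℂ) else 0))
      = (∫ ω, φ (W n ω, T n ω) * (if Y n ω = i then (1 : ℂ) else 0)) *
          χ i j z * ∫ t, ξ t * Complex.exp (-(ψ i z) * t) ∂(μ i)

section ProbabilitySpace

variable [IsProbabilityMeasure (volume : Measure Ω)]

lemma norm_integral_le_of_forall_norm_le {f : Ω → ℂ} {C : ℝ} (h : ∀ ω, ‖f ω‖ ≤ C) :
    ‖∫ ω, f ω‖ ≤ C := by
  simpa using norm_integral_le_of_norm_le_const (μ := volume) (.of_forall h)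

lemma norm_ZserTerm_le (hs : s.re = 0) (hη : 0 ≤ η.re) (hT : ∀ ω, 0 ≤ T (n + 1) ω) :
    ‖ZserTerm W T Y j r s η n‖ ≤ ‖r‖ ^ (n + 1) := by
  rw [ZserTerm, norm_mul, norm_pow]
  refine mul_le_of_le_one_right (by positivity) (norm_integral_le_of_forall_norm_le fun ω => ?_)
  rw [norm_mul]
  exact mul_le_one₀ (norm_cexp_neg_mul_sub_le_one hs hη _ (hT ω)) (norm_nonneg _)
    (norm_ite_one_zero_le _)

lemma norm_VserTerm_le (hs : s.re = 0) (hη : 0 ≤ η.re) (hT : ∀ ω, 0 ≤ T (n + 2) ω) :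
    ‖VserTerm W S A T Y a j r s η n‖ ≤ 2 * ‖r‖ ^ (n + 2) := by
  rw [VserTerm, norm_mul, norm_pow, mul_comm 2]
  refine mul_le_mul_of_nonneg_left (norm_integral_le_of_forall_norm_le fun ω => ?_)
    (by positivity)
  exact norm_VserTerm_integrand_le hs hη _ (hT ω) _

lemma summable_norm_ZserTerm (hr : ‖r‖ < 1) (hs : s.re = 0) (hη : 0 ≤ η.re)
    (hT : ∀ n, 1 ≤ n → ∀ ω, 0 ≤ T n ω) : Summable fun n => ‖ZserTerm W T Y j r s η n‖ :=
  .of_nonneg_of_le (fun _ => norm_nonneg _) (fun n => norm_ZserTerm_le hs hη (hT _ (by omega)))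
    ((summable_nat_add_iff 1).mpr (summable_geometric_of_lt_one (norm_nonneg r) hr))

lemma summable_norm_VserTerm (hr : ‖r‖ < 1) (hs : s.re = 0) (hη : 0 ≤ η.re)
    (hT : ∀ n, 1 ≤ n → ∀ ω, 0 ≤ T n ω) : Summable fun n => ‖VserTerm W S A T Y a j r s η n‖ :=
  .of_nonneg_of_le (fun _ => norm_nonneg _) (fun n => norm_VserTerm_le hs hη (hT _ (by omega)))
    (((summable_nat_add_iff 2).mpr (summable_geometric_of_lt_one (norm_nonneg r) hr)).mul_left 2)

lemma integrable_factorized_integrand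
    (hWmeas : ∀ n, Measurable (W n)) (hTmeas : ∀ n, Measurable (T n))
    (hSmeas : ∀ n, Measurable (S n)) (hAmeas : ∀ n, Measurable (A n))
    (hYmeas : ∀ n, Measurable (Y n)) (hs : s.re = 0) (hη : 0 ≤ η.re)
    (hT : ∀ ω, 0 ≤ T (n + 1) ω) (hA : ∀ ω, 0 ≤ A (n + 2) ω) :
    Integrable fun ω => Complex.exp (-(a * s) * W (n + 1) ω - η * T (n + 1) ω) *
      Complex.exp (-s * S (n + 1) ω) * Complex.exp (-(η - s) * A (n + 2) ω) *
      (if Y (n + 2) ω = j then (1 : ℂ) else 0) := by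
  refine .of_bound (Measurable.aestronglyMeasurable (by fun_prop)) 1 (.of_forall fun ω => ?_)
  simp only [norm_mul]
  refine le_of_le_of_eq (b := 1 * 1 * 1 * 1) ?_ (by norm_num)
  gcongr
  · exact norm_cexp_neg_mul_sub_le_one (by simp [hs]) hη _ (hT ω)
  · exact (norm_cexp_neg_mul_ofReal_of_re_eq_zero hs _).le
  · exact norm_cexp_neg_mul_ofReal_le_one (by simpa [hs] using hη) (hA ω)
  · exact norm_ite_one_zero_le _

lemma integral_cexp_succ_eq_add
    (hWmeas : ∀ n, Measurable (W n)) (hTmeas : ∀ n, Measurable (T n))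
    (hSmeas : ∀ n, Measurable (S n)) (hAmeas : ∀ n, Measurable (A n))
    (hYmeas : ∀ n, Measurable (Y n)) (hs : s.re = 0) (hη : 0 ≤ η.re)
    (hT : ∀ ω, 0 ≤ T (n + 1) ω) (hT' : ∀ ω, 0 ≤ T (n + 2) ω) (hA : ∀ ω, 0 ≤ A (n + 2) ω)
    (hrec : ∀ᵐ ω, W (n + 2) ω = max (a * W (n + 1) ω + S (n + 1) ω - A (n + 2) ω) 0 ∧
      T (n + 2) ω = T (n + 1) ω + A (n + 2) ω) :
    ∫ ω, Complex.exp (-s * W (n + 2) ω - η * T (n + 2) ω) *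
        (if Y (n + 2) ω = j then (1 : ℂ) else 0) =
      (∫ ω, Complex.exp (-(a * s) * W (n + 1) ω - η * T (n + 1) ω) *
          Complex.exp (-s * S (n + 1) ω) * Complex.exp (-(η - s) * A (n + 2) ω) *
          (if Y (n + 2) ω = j then (1 : ℂ) else 0)) +
        ∫ ω, (1 - Complex.exp (-s * (min (a * W (n + 1) ω + S (n + 1) ω - A (n + 2) ω) 0 : ℝ))) *
          Complex.exp (-η * T (n + 2) ω) * (if Y (n + 2) ω = j then (1 : ℂ) else 0) := by
  rw [← integral_add
    (integrable_factorized_integrand hWmeas hTmeas hSmeas hAmeas hYmeas hs hη hT hA)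
    (.of_bound (Measurable.aestronglyMeasurable (by fun_prop)) 2
      (.of_forall fun ω => norm_VserTerm_integrand_le hs hη _ (hT' ω) _))]
  refine integral_congr_ae ?_
  filter_upwards [hrec] with ω ⟨hWω, hTω⟩
  rw [hWω, hTω, cexp_step_eq]
  ring

lemma integral_factorized_eq_sum {μ : Fin N → Measure ℝ} {β : Fin N → ℂ → ℂ}
    {χ : Fin N → Fin N → ℂ → ℂ} {ψ : Fin N → ℂ → ℂ}
    (hWmeas : ∀ n, Measurable (W n)) (hTmeas : ∀ n, Measurable (T n))
    (hSmeas : ∀ n, Measurable (S n)) (hAmeas : ∀ n, Measurable (A n))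
    (hYmeas : ∀ n, Measurable (Y n)) (hs : s.re = 0) (hη : 0 ≤ η.re)
    (hT : ∀ ω, 0 ≤ T (n + 1) ω) (hA : ∀ ω, 0 ≤ A (n + 2) ω)
    (hβ : ∀ i z, β i z = ∫ x, Complex.exp (-z * x) ∂(μ i))
    (hfact : LaplaceFactorizationAt W T S A Y μ χ ψ (n + 1)) :
    ∫ ω, Complex.exp (-(a * s) * W (n + 1) ω - η * T (n + 1) ω) *
        Complex.exp (-s * S (n + 1) ω) * Complex.exp (-(η - s) * A (n + 2) ω) *
        (if Y (n + 2) ω = j then (1 : ℂ) else 0) =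
      ∑ i, (∫ ω, Complex.exp (-(a * s) * W (n + 1) ω - η * T (n + 1) ω) *
        (if Y (n + 1) ω = i then (1 : ℂ) else 0)) * β i (s + ψ i (η - s)) * χ i j (η - s) := by
  have has : ((a : ℂ) * s).re = 0 := by simp [hs]
  -- `max p.2 0` makes `φ` bounded; it is harmless because `T (n + 1) ≥ 0`.
  set φ : ℝ × ℝ → ℂ := fun p => Complex.exp (-(a * s) * p.1 - η * (max p.2 0 : ℝ))
  have hφ (ω : Ω) : φ (W (n + 1) ω, T (n + 1) ω) =
      Complex.exp (-(a * s) * W (n + 1) ω - η * T (n + 1) ω) := by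
    simp only [φ, max_eq_left (hT ω)]
  have hfact' (i : Fin N) := hfact i j φ (fun t => Complex.exp (-s * t)) (by fun_prop)
    ⟨1, fun p => norm_cexp_neg_mul_sub_le_one has hη _ (le_max_right _ _)⟩ (by fun_prop)
    ⟨1, fun t => (norm_cexp_neg_mul_ofReal_of_re_eq_zero hs t).le⟩ (η - s)
    (by simpa [hs] using hη)
  simp only [hφ] at hfact'
  rw [integral_eq_sum_integral_mul_ite
    (integrable_factorized_integrand hWmeas hTmeas hSmeas hAmeas hYmeas hs hη hT hA)
    (hYmeas (n + 1))]
  refine Finset.sum_congr rfl fun i _ => ?_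
  have hβi : β i (s + ψ i (η - s)) =
      ∫ t, Complex.exp (-s * t) * Complex.exp (-(ψ i (η - s)) * t) ∂(μ i) := by
    simp only [hβ, ← Complex.exp_add]
    ring_nf
  rw [hβi, mul_right_comm, ← hfact' i]
  congr 1 with ω
  ring

lemma ZserTerm_succ {μ : Fin N → Measure ℝ} {β : Fin N → ℂ → ℂ}
    {χ : Fin N → Fin N → ℂ → ℂ} {ψ : Fin N → ℂ → ℂ}
    (hWmeas : ∀ n, Measurable (W n)) (hTmeas : ∀ n, Measurable (T n))
    (hSmeas : ∀ n, Measurable (S n)) (hAmeas : ∀ n, Measurable (A n))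
    (hYmeas : ∀ n, Measurable (Y n)) (hs : s.re = 0) (hη : 0 ≤ η.re)
    (hTpos : ∀ n, 1 ≤ n → ∀ ω, 0 ≤ T n ω) (hApos : ∀ n, 2 ≤ n → ∀ ω, 0 ≤ A n ω)
    (hrec : ∀ᵐ ω, ∀ n, 1 ≤ n →
      W (n + 1) ω = max (a * W n ω + S n ω - A (n + 1) ω) 0 ∧ T (n + 1) ω = T n ω + A (n + 1) ω)
    (hβ : ∀ i z, β i z = ∫ x, Complex.exp (-z * x) ∂(μ i))
    (hfact : LaplaceFactorizationAt W T S A Y μ χ ψ (n + 1)) :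
    ZserTerm W T Y j r s η (n + 1) =
      r * ∑ i, ZserTerm W T Y i r (a * s) η n * (β i (s + ψ i (η - s)) * χ i j (η - s)) +
        VserTerm W S A T Y a j r s η n := by
  have hT := hTpos (n + 1) (by omega)
  have hA := hApos (n + 2) (by omega)
  have hrec' := hrec.mono fun ω h => h (n + 1) (by omega)
  rw [ZserTerm, integral_cexp_succ_eq_add hWmeas hTmeas hSmeas hAmeas hYmeas hs hη hT
    (hTpos (n + 2) (by omega)) hA hrec', integral_factorized_eq_sum hWmeas hTmeas hSmeas hAmeas
    hYmeas hs hη hT hA hβ hfact]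
  simp only [ZserTerm, VserTerm, mul_add, Finset.mul_sum]
  congr 1
  exact Finset.sum_congr rfl fun i _ => by ring

end ProbabilitySpace

end Recursion

theorem stmt_12_general (N : ℕ) (a : ℝ) (w : ℝ)
    (Ω : Type*) [MeasureSpace Ω] [IsProbabilityMeasure (volume : Measure Ω)]
    (W T S A : ℕ → Ω → ℝ) (Y : ℕ → Ω → Fin N)
    (hWmeas : ∀ n, Measurable (W n)) (hTmeas : ∀ n, Measurable (T n))
    (hSmeas : ∀ n, Measurable (S n)) (hAmeas : ∀ n, Measurable (A n))
    (hYmeas : ∀ n, Measurable (Y n))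
    (hTpos : ∀ n, 1 ≤ n → ∀ ω, 0 ≤ T n ω) (hApos : ∀ n, 2 ≤ n → ∀ ω, 0 ≤ A n ω)
    (hrec : ∀ᵐ ω, W 1 ω = w ∧ T 1 ω = 0 ∧ ∀ n, 1 ≤ n →
      W (n + 1) ω = max (a * W n ω + S n ω - A (n + 1) ω) 0 ∧
      T (n + 1) ω = T n ω + A (n + 1) ω)
    (μ : Fin N → Measure ℝ)
    (β : Fin N → ℂ → ℂ) (hβ : ∀ i z, β i z = ∫ x, Complex.exp (-z * x) ∂(μ i))
    (χ : Fin N → Fin N → ℂ → ℂ) (ψ : Fin N → ℂ → ℂ)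
    (hfact : ∀ n : ℕ, 1 ≤ n → ∀ (i j : Fin N) (φ : ℝ × ℝ → ℂ) (ξ : ℝ → ℂ),
      Measurable φ → (∃ C, ∀ x, ‖φ x‖ ≤ C) →
      Measurable ξ → (∃ C, ∀ t, ‖ξ t‖ ≤ C) →
      ∀ z : ℂ, 0 ≤ z.re →
      (∫ ω, φ (W n ω, T n ω) * ξ (S n ω) * Complex.exp (-z * A (n + 1) ω) *
          (if Y n ω = i then (1 : ℂ) else 0) * (if Y (n + 1) ω = j then (1 : ℂ) else 0))
        = (∫ ω, φ (W n ω, T n ω) * (if Y n ω = i then (1 : ℂ) else 0)) *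
            χ i j z * ∫ t, ξ t * Complex.exp (-(ψ i z) * t) ∂(μ i))
    (r s η : ℂ) (hr : ‖r‖ < 1) (hs : s.re = 0) (hη : 0 ≤ η.re) :
    (∀ j, Summable fun n => ‖ZserTerm W T Y j r s η n‖) ∧
    (∀ j, Summable fun n => ‖ZserTerm W T Y j r ((a : ℂ) * s) η n‖) ∧
    (∀ j, Summable fun n => ‖VserTerm W S A T Y a j r s η n‖) ∧
    (∀ j : Fin N,
      (∑' n, ZserTerm W T Y j r s η n) -
          r * ((volume {ω | Y 1 ω = j}).toReal : ℂ) * Complex.exp (-s * w)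
        = r * (∑ i, (∑' n, ZserTerm W T Y i r ((a : ℂ) * s) η n) *
              β i (s + ψ i (η - s)) * χ i j (η - s))
          + ∑' n, VserTerm W S A T Y a j r s η n) := by
  have has : ((a : ℂ) * s).re = 0 := by simp [hs]
  have hZ (s' : ℂ) (hs' : s'.re = 0) (j : Fin N) := summable_norm_ZserTerm (W := W) (Y := Y)
    (j := j) hr hs' hη hTpos
  have hV (j : Fin N) := summable_norm_VserTerm (W := W) (S := S) (A := A) (Y := Y) (a := a)
    (j := j) hr hs hη hTpos
  refine ⟨hZ s hs, hZ _ has, hV, fun j => ?_⟩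
  rw [← ZserTerm_zero (η := η) (hYmeas 1) (hrec.mono fun ω h => ⟨h.1, h.2.1⟩)]
  simp only [mul_assoc (∑' n, _)]
  exact tsum_sub_zero_eq_of_succ (hZ s hs j).of_norm (fun i => (hZ _ has i).of_norm)
    (hV j).of_norm fun n => ZserTerm_succ hWmeas hTmeas hSmeas hAmeas hYmeas hs hη hTpos hApos
      (hrec.mono fun ω h => h.2.2) hβ (hfact (n + 1) (by omega))

/-- Theorem 5.3 (equation (5.13)) of the paper: the transient Wiener–Hopf-type
equations for the Markov-modulated reflected autoregressive process in which
each interarrival time depends on the previous service time through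
`E[e^{-s A_{n+1}} 1_{Y_{n+1}=j} | S_n = t, Y_n = i] = χ_{i j}(s) e^{-ψ_i(s) t}`. -/
theorem stmt_12 (N : ℕ) (hN : 1 ≤ N) (a : ℝ) (ha : a ∈ Set.Ioo (0:ℝ) 1)
    (w : ℝ) (hw : 0 ≤ w)
    (Ω : Type*) [MeasureSpace Ω] [IsProbabilityMeasure (volume : Measure Ω)]
    (W T S A : ℕ → Ω → ℝ) (Y : ℕ → Ω → Fin N)
    (hWmeas : ∀ n, Measurable (W n)) (hTmeas : ∀ n, Measurable (T n))
    (hSmeas : ∀ n, Measurable (S n)) (hAmeas : ∀ n, Measurable (A n))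
    (hYmeas : ∀ n, Measurable (Y n))
    (hWpos : ∀ n, 1 ≤ n → ∀ ω, 0 ≤ W n ω) (hTpos : ∀ n, 1 ≤ n → ∀ ω, 0 ≤ T n ω)
    (hSpos : ∀ n, 1 ≤ n → ∀ ω, 0 ≤ S n ω) (hApos : ∀ n, 2 ≤ n → ∀ ω, 0 ≤ A n ω)
    (hrec : ∀ᵐ ω, W 1 ω = w ∧ T 1 ω = 0 ∧ ∀ n, 1 ≤ n →
      W (n + 1) ω = max (a * W n ω + S n ω - A (n + 1) ω) 0 ∧
      T (n + 1) ω = T n ω + A (n + 1) ω)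
    (μ : Fin N → Measure ℝ) (hμprob : ∀ i, IsProbabilityMeasure (μ i))
    (hμsupp : ∀ i, μ i (Set.Iio 0) = 0)
    (β : Fin N → ℂ → ℂ) (hβ : ∀ i z, β i z = ∫ x, Complex.exp (-z * x) ∂(μ i))
    (χ : Fin N → Fin N → ℂ → ℂ) (ψ : Fin N → ℂ → ℂ)
    (hψ : ∀ i z, 0 ≤ z.re → 0 ≤ (ψ i z).re)
    (hfact : ∀ n : ℕ, 1 ≤ n → ∀ (i j : Fin N) (φ : ℝ × ℝ → ℂ) (ξ : ℝ → ℂ),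
      Measurable φ → (∃ C, ∀ x, ‖φ x‖ ≤ C) →
      Measurable ξ → (∃ C, ∀ t, ‖ξ t‖ ≤ C) →
      ∀ z : ℂ, 0 ≤ z.re →
      (∫ ω, φ (W n ω, T n ω) * ξ (S n ω) * Complex.exp (-z * A (n + 1) ω) *
          (if Y n ω = i then (1 : ℂ) else 0) * (if Y (n + 1) ω = j then (1 : ℂ) else 0))
        = (∫ ω, φ (W n ω, T n ω) * (if Y n ω = i then (1 : ℂ) else 0)) *
            χ i j z * ∫ t, ξ t * Complex.exp (-(ψ i z) * t) ∂(μ i))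
    (r s η : ℂ) (hr : ‖r‖ < 1) (hs : s.re = 0) (hη : 0 ≤ η.re) :
    (∀ j, Summable fun n => ‖ZserTerm W T Y j r s η n‖) ∧
    (∀ j, Summable fun n => ‖ZserTerm W T Y j r ((a : ℂ) * s) η n‖) ∧
    (∀ j, Summable fun n => ‖VserTerm W S A T Y a j r s η n‖) ∧
    (∀ j : Fin N,
      (∑' n, ZserTerm W T Y j r s η n) -
          r * ((volume {ω | Y 1 ω = j}).toReal : ℂ) * Complex.exp (-s * w)
        = r * (∑ i, (∑' n, ZserTerm W T Y i r ((a : ℂ) * s) η n) *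
              β i (s + ψ i (η - s)) * χ i j (η - s))
          + ∑' n, VserTerm W S A T Y a j r s η n) :=
  stmt_12_general N a w Ω W T S A Y hWmeas hTmeas hSmeas hAmeas hYmeas hTpos hApos hrec μ β hβ χ ψ
    hfact r s η hr hs hη
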